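/- Let B be a topological abelian group that is an extension 0 → T → B → ℤ̂^r → 0 with T finite, and let Λ be a set of primes. Then B_Λ := lim_{m ∈ N(Λ)} B/mB is topologically finitely generated, and its torsion subgroup (B_Λ)_tor is finite; in particular there exists N ∈ N(Λ) with N·(B_Λ)_tor = 0. -/

import Mathlib

/-!
Since `ℤ̂` is torsion-free, the torsion of `B` is `ι(T)`. Because `ℤ̂ = ℤ + mℤ̂`, the group `ι(T)`
together with lifts of the unit vectors of `ℤ̂^r` generates `B` modulo `mB` for every `m`, so their
images generate a dense subgroup of `B_Λ`. The prime-to-`Λ` part of an integer acts injectively on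
every `B/mB`, so an element of `B_Λ` killed by `n` is killed by the `Λ`-part `a` of `n`; lifting its
component at level `ma` shows that each of its components comes from `a`-torsion of `B`, hence from
`ι(T)`, and finiteness of `T` lets one `t ∈ T` serve at all levels. So the torsion of `B_Λ` is the
image of `ι(T)`: finite and killed by the `Λ`-part of `|T|`.
-/

/-- `NLam L m` : `m` is a positive integer all of whose prime divisors lie in `L`. -/
def NLam (L : Set ℕ) (m : ℕ) : Prop := 0 < m ∧ ∀ p : ℕ, p.Prime → p ∣ m → p ∈ L

/-- Multiplication by `m` as an additive homomorphism. -/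
def smulHom (B : Type*) [AddCommGroup B] (m : ℕ) : B →+ B where
  toFun := fun x => m • x
  map_zero' := smul_zero m
  map_add' := fun a b => smul_add m a b

/-- The subgroup `mB` of `B`. -/
def smulSub (B : Type*) [AddCommGroup B] (m : ℕ) : AddSubgroup B := (smulHom B m).range

lemma smulSub_le (B : Type*) [AddCommGroup B] {m m' : ℕ} (h : m' ∣ m) :
    smulSub B m ≤ smulSub B m' := by
  rintro x ⟨y, rfl⟩
  obtain ⟨c, rfl⟩ := h
  exact ⟨c • y, by simp only [smulHom, AddMonoidHom.coe_mk, ZeroHom.coe_mk, mul_nsmul]; rw [smul_comm]⟩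

/-- The transition map `B/mB → B/m'B` for `m' ∣ m`. -/
def transMap (B : Type*) [AddCommGroup B] {m m' : ℕ} (h : m' ∣ m) :
    (B ⧸ smulSub B m) →+ (B ⧸ smulSub B m') :=
  QuotientAddGroup.map _ _ (AddMonoidHom.id B) (fun x hx => smulSub_le B h hx)

/-- `B_Λ = lim_{m ∈ N(Λ)} B/mB`, as the subgroup of compatible families. -/
def BLam (B : Type*) [AddCommGroup B] (L : Set ℕ) :
    AddSubgroup (∀ m : {m : ℕ // NLam L m}, B ⧸ smulSub B m.1) where
  carrier := {f | ∀ (m m' : {m : ℕ // NLam L m}) (h : m'.1 ∣ m.1),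
    transMap B h (f m) = f m'}
  zero_mem' := by intro m m' h; simp
  add_mem' := by intro a b ha hb m m' h; simp [map_add, ha m m' h, hb m m' h]
  neg_mem' := by intro a ha m m' h; simp [map_neg, ha m m' h]

/-- `ℤ̂`, the profinite completion of `ℤ`: compatible families in `Π n, ℤ/nℤ`. -/
def ZHat : AddSubgroup (∀ n : ℕ+, ZMod n) where
  carrier := {f | ∀ (m n : ℕ+) (h : (m : ℕ) ∣ (n : ℕ)),
    ZMod.castHom h (ZMod m) (f n) = f m}
  zero_mem' := by intro m n h; simp
  add_mem' := by intro a b ha hb m n h; simp [map_add, ha m n h, hb m n h]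
  neg_mem' := by intro a ha m n h; simp [map_neg, ha m n h]

open QuotientAddGroup

lemma mem_smulSub_iff {B : Type*} [AddCommGroup B] {m : ℕ} {x : B} :
    x ∈ smulSub B m ↔ ∃ y, m • y = x :=
  Iff.rfl

lemma quotient_smulSub_nsmul_eq_zero {B : Type*} [AddCommGroup B] (m : ℕ)
    (q : B ⧸ smulSub B m) : m • q = 0 := by
  induction q using QuotientAddGroup.induction_on with
  | H x => rw [← mk_nsmul, eq_zero_iff]; exact ⟨x, rfl⟩

lemma eq_zero_of_nsmul_eq_zero_of_coprime {Q : Type*} [AddMonoid Q] {q : Q} {m u : ℕ}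
    (hmu : m.Coprime u) (hm : m • q = 0) (hu : u • q = 0) : q = 0 :=
  AddMonoid.addOrderOf_eq_one_iff.mp <| Nat.eq_one_of_dvd_coprimes hmu
    (addOrderOf_dvd_of_nsmul_eq_zero hm) (addOrderOf_dvd_of_nsmul_eq_zero hu)

namespace NLam

variable {L : Set ℕ}

lemma one (L : Set ℕ) : NLam L 1 :=
  ⟨one_pos, fun _ hp hd => absurd (Nat.dvd_one.mp hd) hp.ne_one⟩

lemma mul {a b : ℕ} (ha : NLam L a) (hb : NLam L b) : NLam L (a * b) :=
  ⟨Nat.mul_pos ha.1 hb.1, fun p hp hd => (hp.dvd_mul.mp hd).elim (ha.2 p hp) (hb.2 p hp)⟩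

lemma of_prime {p : ℕ} (hp : p.Prime) (hpL : p ∈ L) : NLam L p :=
  ⟨hp.pos, fun _ hq hd => (Nat.prime_dvd_prime_iff_eq hq hp).mp hd ▸ hpL⟩

lemma coprime {m u : ℕ} (hm : NLam L m) (hu : NLam Lᶜ u) : m.Coprime u :=
  Nat.coprime_of_dvd fun p hp hpm hpu => hu.2 p hp hpu (hm.2 p hp hpm)

lemma exists_mul_compl {n : ℕ} (hn : 0 < n) :
    ∃ a u, NLam L a ∧ NLam Lᶜ u ∧ n = a * u := by
  induction n using Nat.recOnMul with
  | zero => exact absurd hn (lt_irrefl 0)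
  | one => exact ⟨1, 1, one L, one Lᶜ, rfl⟩
  | prime p hp =>
    by_cases hpL : p ∈ L
    · exact ⟨p, 1, of_prime hp hpL, one Lᶜ, (mul_one p).symm⟩
    · exact ⟨1, p, one L, of_prime hp hpL, (one_mul p).symm⟩
  | mul a b iha ihb =>
    obtain ⟨a₁, u₁, ha₁, hu₁, rfl⟩ := iha (Nat.pos_of_mul_pos_right hn)
    obtain ⟨a₂, u₂, ha₂, hu₂, rfl⟩ := ihb (Nat.pos_of_mul_pos_left hn)
    exact ⟨a₁ * a₂, u₁ * u₂, ha₁.mul ha₂, hu₁.mul hu₂, by ring⟩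

lemma exists_forall_dvd (I : Finset {m : ℕ // NLam L m}) :
    ∃ M : {m : ℕ // NLam L m}, ∀ i ∈ I, i.1 ∣ M.1 :=
  ⟨⟨∏ i ∈ I, i.1, Finset.prod_induction _ (NLam L) (fun _ _ => mul) (one L) fun i _ => i.2⟩,
    fun _ hi => Finset.dvd_prod_of_mem _ hi⟩

end NLam

namespace ZHat

def one : ZHat := ⟨fun _ => 1, fun _ _ _ => map_one _⟩

lemma natCast_val_apply (y : ZHat) {m n : ℕ+} (h : (m : ℕ) ∣ n) :
    (((y.1 n).val : ℕ) : ZMod m) = y.1 m := by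
  rw [← y.2 m n h, ZMod.castHom_apply, ZMod.natCast_val]

lemma eq_zero_of_nsmul_eq_zero {y : ZHat} {n : ℕ} (hn : 0 < n) (h : n • y = 0) : y = 0 := by
  refine Subtype.ext (funext fun k => show y.1 k = 0 from ?_)
  let np : ℕ+ := ⟨n, hn⟩
  have hv : ((k * np : ℕ+) : ℕ) ∣ (y.1 (k * np)).val * n := by
    rw [← ZMod.natCast_eq_zero_iff, Nat.cast_mul, ZMod.natCast_zmod_val, ← nsmul_eq_mul']
    exact congrArg (fun z : ZHat => z.1 (k * np)) h
  rw [← natCast_val_apply y (n := k * np) ⟨n, rfl⟩, ZMod.natCast_eq_zero_iff]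
  exact Nat.dvd_of_mul_dvd_mul_right hn hv

instance : IsAddTorsionFree ZHat :=
  isAddTorsionFree_iff_not_isOfFinAddOrder.mpr fun _ hy hfin =>
    let ⟨_, hn, h⟩ := isOfFinAddOrder_iff_nsmul_eq_zero.mp hfin
    hy (eq_zero_of_nsmul_eq_zero hn h)

lemma exists_nsmul_eq_of_apply_eq_zero {y : ZHat} {M : ℕ+} (h0 : y.1 M = 0) :
    ∃ w : ZHat, (M : ℕ) • w = y := by
  have hdvd : ∀ n : ℕ+, (M : ℕ) ∣ (y.1 (n * M)).val := fun n => by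
    rw [← ZMod.natCast_eq_zero_iff, natCast_val_apply y (n := n * M) ⟨n, mul_comm _ _⟩, h0]
  refine ⟨⟨fun n => (((y.1 (n * M)).val / M : ℕ) : ZMod n), fun k n hk => ?_⟩, ?_⟩
  · rw [map_natCast, ZMod.natCast_eq_natCast_iff]
    apply Nat.ModEq.mul_left_cancel' M.ne_zero
    rw [Nat.mul_div_cancel' (hdvd n), Nat.mul_div_cancel' (hdvd k), mul_comm]
    exact (ZMod.natCast_eq_natCast_iff _ _ _).mp <|
      (natCast_val_apply y (m := k * M) (n := n * M) (Nat.mul_dvd_mul_right hk M)).trans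
        (ZMod.natCast_zmod_val _).symm
  · refine Subtype.ext (funext fun n => ?_)
    show (M : ℕ) • (((y.1 (n * M)).val / M : ℕ) : ZMod n) = y.1 n
    rw [nsmul_eq_mul, ← Nat.cast_mul, Nat.mul_div_cancel' (hdvd n),
      natCast_val_apply y (n := n * M) ⟨M, rfl⟩]

lemma exists_sub_nsmul_one_mem_smulSub (y : ZHat) {m : ℕ} (hm : 0 < m) :
    ∃ c : ℕ, y - c • one ∈ smulSub ZHat m := by
  let M : ℕ+ := ⟨m, hm⟩
  refine ⟨(y.1 M).val, exists_nsmul_eq_of_apply_eq_zero (M := M) ?_⟩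
  show y.1 M - (y.1 M).val • (1 : ZMod M) = 0
  rw [nsmul_eq_mul, mul_one, ZMod.natCast_zmod_val, sub_self]

lemma pi_exists_sub_mem_smulSub {κ : Type*} [Fintype κ] [DecidableEq κ] {m : ℕ} (hm : 0 < m)
    (v : κ → ZHat) :
    ∃ g ∈ AddSubgroup.closure (Set.range fun i => Pi.single i one),
      v - g ∈ smulSub (κ → ZHat) m := by
  choose c w hw using fun i => exists_sub_nsmul_one_mem_smulSub (v i) hm
  refine ⟨∑ i, c i • Pi.single i one, sum_mem fun i _ => ?_, w, ?_⟩
  · exact AddSubgroup.nsmul_mem _ (AddSubgroup.subset_closure (Set.mem_range_self i)) _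
  · simp_rw [← Pi.single_smul, Finset.univ_sum_single]
    exact funext hw

end ZHat

namespace BLam

variable {B : Type*} [AddCommGroup B] {L : Set ℕ}

variable (B L) in
def of : B →+ BLam B L where
  toFun x := ⟨fun m => (x : B ⧸ smulSub B m.1), fun _ _ _ => rfl⟩
  map_zero' := rfl
  map_add' _ _ := rfl

@[simp]
lemma of_apply (x : B) (m : {m : ℕ // NLam L m}) : (of B L x).1 m = (x : B ⧸ smulSub B m.1) :=
  rfl

lemma nsmul_apply (n : ℕ) (b : BLam B L) (m : {m : ℕ // NLam L m}) : (n • b).1 m = n • b.1 m :=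
  rfl

lemma ext {f g : BLam B L} (h : ∀ m, f.1 m = g.1 m) : f = g :=
  Subtype.ext (funext h)

lemma apply_eq_of_dvd {f g : BLam B L} {m m' : {m : ℕ // NLam L m}} (hd : m'.1 ∣ m.1)
    (h : f.1 m = g.1 m) : f.1 m' = g.1 m' := by
  rw [← f.2 m m' hd, ← g.2 m m' hd, h]

lemma nsmul_eq_zero_of_mul_nsmul_eq_zero {a u : ℕ} (hu : NLam Lᶜ u) {b : BLam B L}
    (h : (a * u) • b = 0) : a • b = 0 :=
  ext fun m => eq_zero_of_nsmul_eq_zero_of_coprime (m.2.coprime hu)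
    (quotient_smulSub_nsmul_eq_zero _ _)
    (by rw [← nsmul_apply, smul_smul, mul_comm, h]; rfl)

lemma exists_nsmul_eq_zero_of_isOfFinAddOrder {b : BLam B L} (hb : IsOfFinAddOrder b) :
    ∃ a, NLam L a ∧ a • b = 0 := by
  obtain ⟨n, hn, hnb⟩ := isOfFinAddOrder_iff_nsmul_eq_zero.mp hb
  obtain ⟨a, u, ha, hu, rfl⟩ := NLam.exists_mul_compl hn
  exact ⟨a, ha, nsmul_eq_zero_of_mul_nsmul_eq_zero hu hnb⟩

lemma apply_mem_image_of_nsmul_eq_zero {a : ℕ} (ha : NLam L a) {b : BLam B L}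
    (hb : a • b = 0) (m : {m : ℕ // NLam L m}) :
    b.1 m ∈ ((↑) : B → B ⧸ smulSub B m.1) '' {x | a • x = 0} := by
  -- lift the component at level `m * a` to `β`; then `a • β = (m * a) • γ` and `β - m • γ` works
  let ma : {m : ℕ // NLam L m} := ⟨m.1 * a, m.2.mul ha⟩
  obtain ⟨β, hβ⟩ := QuotientAddGroup.mk_surjective (b.1 ma)
  obtain ⟨γ, hγ⟩ : a • β ∈ smulSub B (m.1 * a) := by
    rw [← eq_zero_iff, mk_nsmul, hβ, ← nsmul_apply, hb]
    rfl
  refine ⟨β - m.1 • γ, ?_, ?_⟩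
  · rw [Set.mem_ofPred_eq, smul_sub, smul_comm, ← mul_nsmul']
    exact sub_eq_zero.mpr hγ.symm
  · rw [mk_sub, (eq_zero_iff _).mpr (mem_smulSub_iff.mpr ⟨γ, rfl⟩), sub_zero, ← b.2 ma m ⟨a, rfl⟩,
      ← hβ]
    rfl

/-- If every `x ∈ F` disagreed with `b` at some level, all of them would disagree with `b` at the
product of these levels. -/
lemma mem_image_of_of_forall_apply_mem_image {F : Set B} (hF : F.Finite) {b : BLam B L}
    (hb : ∀ m, b.1 m ∈ ((↑) : B → B ⧸ smulSub B m.1) '' F) : b ∈ of B L '' F := by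
  by_contra! h
  simp only [Set.mem_image, not_exists, not_and] at h
  have hlevel : ∀ x ∈ F, ∃ m, (x : B ⧸ smulSub B m.1) ≠ b.1 m := fun x hx => by
    by_contra! h'
    exact h x hx (ext h')
  have : Nonempty {m : ℕ // NLam L m} := ⟨⟨1, NLam.one L⟩⟩
  choose! m hm using hlevel
  obtain ⟨M, hM⟩ := NLam.exists_forall_dvd (hF.toFinset.image m)
  obtain ⟨x, hx, hxM⟩ := hb M
  exact hm x hx <| apply_eq_of_dvd (f := of B L x)
    (hM _ (Finset.mem_image_of_mem _ (hF.mem_toFinset.mpr hx))) hxM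

theorem setOf_isOfFinAddOrder_subset_image_of (hB : {x : B | IsOfFinAddOrder x}.Finite) :
    {b : BLam B L | IsOfFinAddOrder b} ⊆ of B L '' {x | IsOfFinAddOrder x} := by
  intro b hb
  obtain ⟨a, ha, hab⟩ := exists_nsmul_eq_zero_of_isOfFinAddOrder hb
  have hF : {x : B | a • x = 0} ⊆ {x | IsOfFinAddOrder x} := fun x hx =>
    isOfFinAddOrder_iff_nsmul_eq_zero.mpr ⟨a, ha.1, hx⟩
  obtain ⟨x, hx, rfl⟩ := mem_image_of_of_forall_apply_mem_image (hB.subset hF)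
    (apply_mem_image_of_nsmul_eq_zero ha hab)
  exact ⟨x, hF hx, rfl⟩

lemma dense_of_forall_apply [TopologicalSpace B] {H : Set (BLam B L)}
    (hH : ∀ f : BLam B L, ∀ M, ∃ g ∈ H, g.1 M = f.1 M) : Dense H := by
  refine dense_iff_inter_open.mpr fun U hU ⟨f, hfU⟩ => ?_
  obtain ⟨V, hV, rfl⟩ := isOpen_induced_iff.mp hU
  obtain ⟨I, u, hIu, hpi⟩ := isOpen_pi_iff.mp hV f.1 hfU
  obtain ⟨M, hM⟩ := NLam.exists_forall_dvd I
  obtain ⟨g, hgH, hgM⟩ := hH f M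
  refine ⟨g, hpi fun i hi => ?_, hgH⟩
  rw [apply_eq_of_dvd (hM i hi) hgM]
  exact (hIu i hi).2

lemma dense_map_of [TopologicalSpace B] {G : AddSubgroup B}
    (hG : ∀ m, NLam L m → ∀ x : B, ∃ y ∈ G, x - y ∈ smulSub B m) :
    Dense (G.map (of B L) : Set (BLam B L)) :=
  dense_of_forall_apply fun f M => by
    obtain ⟨x, hx⟩ := QuotientAddGroup.mk_surjective (f.1 M)
    obtain ⟨y, hyG, hxy⟩ := hG M.1 M.2 x
    exact ⟨of B L y, ⟨y, hyG, rfl⟩, by rw [of_apply, ← hx]; exact (eq_iff_sub_mem.mpr hxy).symm⟩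

end BLam

section Extension

variable {T B A : Type*} [AddCommGroup T] [AddCommGroup B] [AddCommGroup A]

lemma mem_range_of_isOfFinAddOrder [IsAddTorsionFree A] {ι : T →+ B} {π : B →+ A}
    (hex : π.ker = ι.range) {x : B} (hx : IsOfFinAddOrder x) : x ∈ ι.range :=
  hex ▸ (π.isOfFinAddOrder hx).eq_zero'

lemma exists_sub_mem_smulSub_of_surjective {π : B →+ A} (hπ : Function.Surjective π)
    {G : AddSubgroup B} (hker : π.ker ≤ G) {m : ℕ}
    (hA : ∀ a : A, ∃ g ∈ G.map π, a - g ∈ smulSub A m) (x : B) :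
    ∃ y ∈ G, x - y ∈ smulSub B m := by
  obtain ⟨_, ⟨g, hg, rfl⟩, a, ha⟩ := hA (π x)
  obtain ⟨v, rfl⟩ := hπ a
  refine ⟨g + (x - g - m • v), G.add_mem hg (hker ?_), mem_smulSub_iff.mpr ⟨v, by abel⟩⟩
  rw [AddMonoidHom.mem_ker, map_sub, map_sub, map_nsmul, sub_eq_zero]
  exact ha.symm

lemma exists_sub_mem_smulSub_of_extension {κ : Type*} [Fintype κ] [DecidableEq κ]
    {ι : T →+ B} {π : B →+ (κ → ZHat)} (hπ : Function.Surjective π) (hex : π.ker = ι.range)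
    {b : κ → B} (hb : ∀ i, π (b i) = Pi.single i ZHat.one) {m : ℕ} (hm : 0 < m) (x : B) :
    ∃ y ∈ AddSubgroup.closure (Set.range ι ∪ Set.range b), x - y ∈ smulSub B m := by
  refine exists_sub_mem_smulSub_of_surjective hπ ?_ (fun v => ?_) x
  · rw [hex]
    rintro _ ⟨t, rfl⟩
    exact AddSubgroup.subset_closure (Or.inl ⟨t, rfl⟩)
  · obtain ⟨g, hg, hvg⟩ := ZHat.pi_exists_sub_mem_smulSub hm v
    refine ⟨g, AddSubgroup.closure_le _ |>.mpr ?_ hg, hvg⟩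
    rintro _ ⟨i, rfl⟩
    exact ⟨b i, AddSubgroup.subset_closure (Or.inr ⟨i, rfl⟩), hb i⟩

end Extension

theorem BLam_top_fg_and_torsion_finite_general
    {B : Type*} [AddCommGroup B] [TopologicalSpace B]
    {T : Type*} [AddCommGroup T] [Finite T] (r : ℕ)
    (ι : T →+ B) (π : B →+ (Fin r → ZHat))
    (hπ : Function.Surjective π)
    (hex : π.ker = ι.range)
    (L : Set ℕ) :
    (∃ Sgen : Finset (BLam B L),
      Dense ((AddSubgroup.closure (Sgen : Set (BLam B L)) : Set (BLam B L)))) ∧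
    {b : BLam B L | ∃ n : ℕ, 0 < n ∧ n • b = 0}.Finite ∧
    (∃ N : ℕ, NLam L N ∧ ∀ b : BLam B L, (∃ n : ℕ, 0 < n ∧ n • b = 0) → N • b = 0) := by
  have htors : {x : B | IsOfFinAddOrder x} ⊆ ι.range := fun _ =>
    mem_range_of_isOfFinAddOrder hex
  have htorsFin := (Set.finite_range ι).subset htors
  have htorsBLam := BLam.setOf_isOfFinAddOrder_subset_image_of (L := L) htorsFin
  simp_rw [← isOfFinAddOrder_iff_nsmul_eq_zero]
  refine ⟨?_, (htorsFin.image _).subset htorsBLam, ?_⟩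
  · choose b hb using fun i => hπ (Pi.single i ZHat.one)
    have hS := (Set.finite_range ι).union (Set.finite_range b)
    refine ⟨(hS.image (BLam.of B L)).toFinset, ?_⟩
    rw [Set.Finite.coe_toFinset, ← AddMonoidHom.map_closure]
    exact BLam.dense_map_of fun m hm => exists_sub_mem_smulSub_of_extension hπ hex hb hm.1
  · obtain ⟨N, u, hN, hu, he⟩ := NLam.exists_mul_compl (L := L) (Nat.card_pos (α := T))
    refine ⟨N, hN, fun b hb => BLam.nsmul_eq_zero_of_mul_nsmul_eq_zero hu ?_⟩
    obtain ⟨_, hx, rfl⟩ := htorsBLam hb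
    obtain ⟨t, rfl⟩ := htors hx
    rw [← he, ← map_nsmul, ← map_nsmul, card_nsmul_eq_zero', map_zero, map_zero]

/-- Let `B` be a topological abelian group which is an extension
`0 → T → B → ℤ̂^r → 0` with `T` finite, and `Λ` a set of primes.  Then
`B_Λ = lim_{m ∈ N(Λ)} B/mB` is topologically finitely generated, its torsion subgroup
is finite, and in particular some `N ∈ N(Λ)` annihilates the torsion of `B_Λ`. -/
theorem BLam_top_fg_and_torsion_finite
    {B : Type*} [AddCommGroup B] [TopologicalSpace B] [IsTopologicalAddGroup B]
    {T : Type*} [AddCommGroup T] [Finite T] (r : ℕ)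
    (ι : T →+ B) (π : B →+ (Fin r → ZHat))
    (hι : Function.Injective ι) (hπ : Function.Surjective π)
    (hex : π.ker = ι.range)
    (L : Set ℕ) (hL : ∀ p ∈ L, p.Prime) :
    (∃ Sgen : Finset (BLam B L),
      Dense ((AddSubgroup.closure (Sgen : Set (BLam B L)) : Set (BLam B L)))) ∧
    {b : BLam B L | ∃ n : ℕ, 0 < n ∧ n • b = 0}.Finite ∧
    (∃ N : ℕ, NLam L N ∧ ∀ b : BLam B L, (∃ n : ℕ, 0 < n ∧ n • b = 0) → N • b = 0) :=
  BLam_top_fg_and_torsion_finite_general r ι π hπ hex L
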